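/- Let n ≥ 3, μ > 2, and for β > 0 let x₀(β) = -Dβ e_n with D > 1 fixed, and b_β(x) = C_n β^{(n-2)/2}/(|x-x₀(β)|² - β²)^{(n-2)/2} with C_n = (n(n-2))^{(n-2)/4}. Fix 0 < r < R such that for all small β the half-annulus A_β(r,R) = {x ∈ ℝⁿ₊ : r < |x - x₀(β)| < R} is contained in {b_β ≤ 1}. Then lim_{β→0} ∫_{A_β(r,R)} |∇b_β|² / b_β^μ dx = +∞. -/

import Mathlib

noncomputable section

open Real Filter Topology MeasureTheory

abbrev E (n : ℕ) := EuclideanSpace ℝ (Fin n)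

def pd {n : ℕ} (f : E n → ℝ) (i : Fin n) (x : E n) : ℝ :=
  fderiv ℝ f x (EuclideanSpace.single i 1)

/-! Write `t = ‖x - x₀‖² - β²` and `ν = (n - 2) / 2`, so that `b_β = c t^(-ν)` with
`c = C_n β^ν`. Then `|∇b_β|² / b_β^μ = 4 ν² c^(2-μ) ‖x - x₀‖² t^(νμ - 2ν - 2)`. Since `x₀(β) → 0`,
for small `β` the half-annulus contains a fixed ball on which `‖x - x₀‖² t^(νμ - 2ν - 2)` is
bounded below uniformly in `β`. So the integral is at least `K c^(2-μ)`, which tends to `+∞`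
because `c → 0` and `μ > 2`. -/

def bubbleProfile {F : Type*} [NormedAddCommGroup F] (c ν β : ℝ) (p y : F) : ℝ :=
  c / (‖y - p‖ ^ 2 - β ^ 2) ^ ν

theorem hasGradientAt_bubbleProfile {F : Type*} [NormedAddCommGroup F] [InnerProductSpace ℝ F]
    [CompleteSpace F] {c ν β : ℝ} {p x : F} (hx : β ^ 2 < ‖x - p‖ ^ 2) :
    HasGradientAt (bubbleProfile c ν β p)
      ((-2 * ν * c * (‖x - p‖ ^ 2 - β ^ 2) ^ (-ν - 1)) • (x - p)) x := by
  have ht : 0 < ‖x - p‖ ^ 2 - β ^ 2 := sub_pos.2 hx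
  have hψ : HasDerivAt (fun t : ℝ => c / t ^ ν) (c * (-ν * (‖x - p‖ ^ 2 - β ^ 2) ^ (-ν - 1)))
      (‖x - p‖ ^ 2 - β ^ 2) := by
    refine ((Real.hasDerivAt_rpow_const (Or.inl ht.ne')).const_mul c).congr_of_eventuallyEq ?_
    filter_upwards [eventually_gt_nhds ht] with t htpos
    rw [Real.rpow_neg htpos.le, div_eq_mul_inv]
  have hφ : HasFDerivAt (fun y : F => ‖y - p‖ ^ 2 - β ^ 2) (2 • innerSL ℝ (x - p)) x := by
    simpa using (((hasFDerivAt_id x).sub_const p).norm_sq).sub_const (β ^ 2)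
  rw [hasGradientAt_iff_hasFDerivAt]
  refine (hψ.comp_hasFDerivAt x hφ).congr_fderiv ?_
  ext y
  simp
  ring

theorem sum_sq_pd_eq_norm_sq {n : ℕ} {f : E n → ℝ} {g x : E n} (hf : HasGradientAt f g x) :
    ∑ i, pd f i x ^ 2 = ‖g‖ ^ 2 := by
  simp [pd, hf.hasFDerivAt.fderiv, EuclideanSpace.inner_single_right,
    EuclideanSpace.real_norm_sq_eq]

theorem sq_mul_div_rpow_eq {c t ν μ : ℝ} (s : ℝ) (hc : 0 < c) (ht : 0 < t) :
    (-2 * ν * c * t ^ (-ν - 1)) ^ 2 * s / (c / t ^ ν) ^ μ =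
      4 * ν ^ 2 * c ^ (2 - μ) * (s * t ^ (ν * μ - 2 * ν - 2)) := by
  have hden : (c / t ^ ν) ^ μ = c ^ μ / t ^ (ν * μ) := by
    rw [Real.div_rpow hc.le (Real.rpow_nonneg ht.le ν), ← Real.rpow_mul ht.le]
  have hsq : (t ^ (-ν - 1)) ^ 2 = t ^ (-2 * ν - 2) := by
    rw [← Real.rpow_mul_natCast ht.le]; push_cast; ring_nf
  have hc2 : c ^ (2 - μ) = c ^ 2 / c ^ μ := by
    rw [Real.rpow_sub hc, Real.rpow_two]
  have ht2 : t ^ (ν * μ - 2 * ν - 2) = t ^ (ν * μ) * t ^ (-2 * ν - 2) := by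
    rw [← Real.rpow_add ht]; ring_nf
  have := Real.rpow_pos_of_pos hc μ
  have := Real.rpow_pos_of_pos ht (ν * μ)
  rw [hden, mul_pow, hsq, hc2, ht2]
  field_simp
  ring

theorem energyDensity_bubbleProfile {n : ℕ} {c ν μ β : ℝ} {p x : E n} (hc : 0 < c)
    (hx : β ^ 2 < ‖x - p‖ ^ 2) :
    (∑ i, pd (bubbleProfile c ν β p) i x ^ 2) / bubbleProfile c ν β p x ^ μ =
      4 * ν ^ 2 * c ^ (2 - μ) * (‖x - p‖ ^ 2 * (‖x - p‖ ^ 2 - β ^ 2) ^ (ν * μ - 2 * ν - 2)) := by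
  rw [sum_sq_pd_eq_norm_sq (hasGradientAt_bubbleProfile hx), norm_smul, mul_pow,
    Real.norm_eq_abs, sq_abs]
  exact sq_mul_div_rpow_eq _ hc (sub_pos.2 hx)

theorem integrableOn_closedBall_diff_ball {F : Type*} [NormedAddCommGroup F] [ProperSpace F]
    [MeasurableSpace F] [BorelSpace F] (m : Measure F) [IsFiniteMeasureOnCompacts m]
    {β r R : ℝ} (e : ℝ) (p : F) (hβr : |β| < r) :
    IntegrableOn (fun x => ‖x - p‖ ^ 2 * (‖x - p‖ ^ 2 - β ^ 2) ^ e)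
      (Metric.closedBall p R \ Metric.ball p r) m := by
  refine ContinuousOn.integrableOn_compact ((isCompact_closedBall p R).diff Metric.isOpen_ball) ?_
  refine (continuous_norm.comp (continuous_sub_right p)).pow 2 |>.continuousOn.mul ?_
  refine ContinuousOn.rpow_const (by fun_prop) fun x hx => Or.inl (sub_pos.2 ?_).ne'
  have hrx : r ≤ ‖x - p‖ := by simpa [dist_eq_norm] using hx.2
  exact sq_lt_sq' (by linarith [neg_abs_le β]) (by linarith [le_abs_self β])

theorem min_rpow_le_rpow {a b t : ℝ} (e : ℝ) (ha : 0 < a) (hat : a ≤ t) (htb : t ≤ b) :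
    min (a ^ e) (b ^ e) ≤ t ^ e := by
  rcases le_or_gt 0 e with he | he
  · exact (min_le_left _ _).trans (Real.rpow_le_rpow ha.le hat he)
  · exact (min_le_right _ _).trans (Real.rpow_le_rpow_of_nonpos (ha.trans_le hat) htb he.le)

theorem le_sq_mul_rpow_sq_sub_sq {β r R s : ℝ} (e : ℝ) (hr : 0 < r) (hβ : 2 * β ^ 2 ≤ r ^ 2)
    (hrs : r ≤ s) (hsR : s ≤ R) :
    r ^ 2 * min ((r ^ 2 / 2) ^ e) ((R ^ 2) ^ e) ≤ s ^ 2 * (s ^ 2 - β ^ 2) ^ e := by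
  have hrs2 : r ^ 2 ≤ s ^ 2 := pow_le_pow_left₀ hr.le hrs 2
  have hmin : min ((r ^ 2 / 2) ^ e) ((R ^ 2) ^ e) ≤ (s ^ 2 - β ^ 2) ^ e :=
    min_rpow_le_rpow e (by positivity) (by linarith)
      (by nlinarith [pow_le_pow_left₀ (hr.le.trans hrs) hsR 2])
  exact mul_le_mul hrs2 hmin (le_min (by positivity) (by positivity)) (sq_nonneg s)

theorem ball_subset_halfAnnulus {n : ℕ} (j : Fin n) {r R : ℝ} (hr : 0 < r) {p : E n}
    (hp : ‖p‖ < (R - r) / 4) :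
    Metric.ball (EuclideanSpace.single j ((r + R) / 2)) ((R - r) / 4) ⊆
      {x : E n | 0 < x j ∧ r < ‖x - p‖ ∧ ‖x - p‖ < R} := by
  intro x hx
  set q : E n := EuclideanSpace.single j ((r + R) / 2)
  have hxq : ‖x - q‖ < (R - r) / 4 := by rwa [Metric.mem_ball, dist_eq_norm] at hx
  have hq : ‖q‖ = (r + R) / 2 := by
    rw [PiLp.norm_single, Real.norm_eq_abs, abs_of_pos (by linarith [hp.trans_le' (norm_nonneg p)])]
  have hcoord : |x j - (r + R) / 2| ≤ ‖x - q‖ := by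
    simpa [q] using PiLp.norm_apply_le (x - q) j
  have hlow : ‖q‖ ≤ ‖x - q‖ + ‖x - p‖ + ‖p‖ := by
    simpa [norm_sub_rev q x] using norm_add₃_le (a := q - x) (b := x - p) (c := p)
  have hup : ‖x - p‖ ≤ ‖x - q‖ + ‖q‖ + ‖p‖ := by
    simpa [← sub_eq_add_neg] using norm_add₃_le (a := x - q) (b := q) (c := -p)
  refine ⟨?_, ?_, ?_⟩
  · linarith [neg_abs_le (x j - (r + R) / 2)]
  · linarith
  · linarith

theorem exists_pos_mul_rpow_le_setIntegral_energy {n : ℕ} (j : Fin n) {ν μ r R : ℝ}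
    (hν : ν ≠ 0) (hr : 0 < r) (hrR : r < R) :
    ∃ K > 0, ∀ (c β : ℝ) (p : E n), 0 < c → 2 * β ^ 2 ≤ r ^ 2 → ‖p‖ < (R - r) / 4 →
      K * c ^ (2 - μ) ≤ ∫ x in {x : E n | 0 < x j ∧ r < ‖x - p‖ ∧ ‖x - p‖ < R},
        (∑ i, pd (bubbleProfile c ν β p) i x ^ 2) / bubbleProfile c ν β p x ^ μ := by
  set e := ν * μ - 2 * ν - 2
  set B := Metric.ball (EuclideanSpace.single j ((r + R) / 2) : E n) ((R - r) / 4)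
  set m₀ := r ^ 2 * min ((r ^ 2 / 2) ^ e) ((R ^ 2) ^ e)
  have hB : 0 < volume.real B :=
    ENNReal.toReal_pos (Metric.measure_ball_pos volume _ (by linarith)).ne' measure_ball_lt_top.ne
  have hR : 0 < R := hr.trans hrR
  have hm₀ : 0 < m₀ := mul_pos (by positivity) (lt_min (by positivity) (by positivity))
  have hν2 : 0 < ν ^ 2 := sq_pos_of_ne_zero hν
  refine ⟨4 * ν ^ 2 * m₀ * volume.real B, by positivity, fun c β p hc hβ hp => ?_⟩
  set A := {x : E n | 0 < x j ∧ r < ‖x - p‖ ∧ ‖x - p‖ < R}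
  set G := fun x : E n => ‖x - p‖ ^ 2 * (‖x - p‖ ^ 2 - β ^ 2) ^ e
  have hβr : |β| < r := abs_lt_of_sq_lt_sq (by nlinarith) hr.le
  have hβA : ∀ x ∈ A, β ^ 2 < ‖x - p‖ ^ 2 := fun x hx =>
    sq_lt_sq' (by linarith [neg_abs_le β, hx.2.1]) (by linarith [le_abs_self β, hx.2.1])
  have hBA : B ⊆ A := ball_subset_halfAnnulus j hr hp
  have hAmeas : MeasurableSet A := by
    have hnorm : Continuous fun x : E n => ‖x - p‖ := by fun_prop
    exact ((isOpen_lt continuous_const (by fun_prop : Continuous fun x : E n => x j)).inter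
      ((isOpen_lt continuous_const hnorm).inter (isOpen_lt hnorm continuous_const))).measurableSet
  have hGint : IntegrableOn (fun x => 4 * ν ^ 2 * c ^ (2 - μ) * G x) A := by
    refine ((integrableOn_closedBall_diff_ball volume e p (R := R) hβr).mono_set ?_).const_mul _
    intro x hx
    simpa [dist_eq_norm] using ⟨hx.2.2.le, hx.2.1.le⟩
  calc 4 * ν ^ 2 * m₀ * volume.real B * c ^ (2 - μ)
      = 4 * ν ^ 2 * c ^ (2 - μ) * m₀ * volume.real B := by ring
    _ ≤ ∫ x in B, 4 * ν ^ 2 * c ^ (2 - μ) * G x := by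
      refine setIntegral_ge_of_const_le_real measurableSet_ball measure_ball_lt_top.ne
        (fun x hx => ?_) (hGint.mono_set hBA)
      obtain ⟨-, hrx, hxR⟩ := hBA hx
      exact mul_le_mul_of_nonneg_left (le_sq_mul_rpow_sq_sub_sq e hr hβ hrx.le hxR.le)
        (by positivity)
    _ ≤ ∫ x in A, 4 * ν ^ 2 * c ^ (2 - μ) * G x :=
      setIntegral_mono_set hGint (ae_restrict_of_forall_mem hAmeas fun x hx =>
        by have := (sub_pos.2 (hβA x hx)).le; positivity) hBA.eventuallyLE
    _ = ∫ x in A, (∑ i, pd (bubbleProfile c ν β p) i x ^ 2) / bubbleProfile c ν β p x ^ μ :=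
      setIntegral_congr_fun hAmeas fun x hx => (energyDensity_bubbleProfile hc (hβA x hx)).symm

theorem tendsto_mul_rpow_rpow_nhdsGT_zero {C ν a : ℝ} (hC : 0 < C) (hν : 0 < ν) (ha : a < 0) :
    Tendsto (fun β : ℝ => (C * β ^ ν) ^ a) (𝓝[>] 0) atTop := by
  have hbase : Tendsto (fun β : ℝ => C * β ^ ν) (𝓝[>] 0) (𝓝[>] 0) := by
    refine tendsto_nhdsWithin_iff.2 ⟨?_, ?_⟩
    · simpa [Real.zero_rpow hν.ne'] using
        ((Real.continuousAt_rpow_const 0 ν (Or.inr hν.le)).tendsto.mono_left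
          nhdsWithin_le_nhds).const_mul C
    · filter_upwards [self_mem_nhdsWithin] with β hβ
      exact mul_pos hC (Real.rpow_pos_of_pos hβ ν)
  exact (tendsto_rpow_neg_nhdsGT_zero ha).comp hbase

/-- along the bubbles `b_β` (with `μ > 2` and fixed `0 < r < R` such that
the half-annuli `A_β(r,R)` are contained in `{b_β ≤ 1}` for small `β`), the capacity-type
quantity `∫_{A_β(r,R)} |∇b_β|²/b_β^μ` tends to `+∞` as `β → 0⁺`. -/
theorem stmt15 (n : ℕ) (hn : 3 ≤ n) (μ : ℝ) (hμ : 2 < μ)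
    (D : ℝ) (r R : ℝ) (hr : 0 < r) (hrR : r < R)
    (x₀ : ℝ → E n)
    (hx₀ : ∀ β : ℝ, x₀ β = EuclideanSpace.single (⟨n - 1, by omega⟩ : Fin n) (-(D * β)))
    (b : ℝ → E n → ℝ)
    (hb : b = fun β x =>
      ((n : ℝ) * ((n : ℝ) - 2)) ^ (((n : ℝ) - 2) / 4) * β ^ (((n : ℝ) - 2) / 2) /
        (‖x - x₀ β‖ ^ 2 - β ^ 2) ^ (((n : ℝ) - 2) / 2))
    (A : ℝ → Set (E n))
    (hA : ∀ β : ℝ, A β = {x : E n | 0 < x ⟨n - 1, by omega⟩ ∧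
        r < ‖x - x₀ β‖ ∧ ‖x - x₀ β‖ < R}) :
    Tendsto
      (fun β : ℝ => ∫ x in A β, (∑ i, (pd (b β) i x) ^ 2) / (b β x) ^ μ)
      (𝓝[>] (0 : ℝ)) atTop := by
  have hn' : (3 : ℝ) ≤ n := by exact_mod_cast hn
  have hν : 0 < ((n : ℝ) - 2) / 2 := by linarith
  have hCn : 0 < ((n : ℝ) * ((n : ℝ) - 2)) ^ (((n : ℝ) - 2) / 4) :=
    Real.rpow_pos_of_pos (by nlinarith) _
  obtain ⟨K, hK, hlow⟩ := exists_pos_mul_rpow_le_setIntegral_energy (μ := μ)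
    (⟨n - 1, by omega⟩ : Fin n) hν.ne' hr hrR
  have hx₀small : ∀ᶠ β in 𝓝[>] (0 : ℝ), ‖x₀ β‖ < (R - r) / 4 := by
    have : Tendsto (fun β : ℝ => |D * β|) (𝓝 0) (𝓝 0) := by
      simpa using (continuous_const.mul continuous_id).abs.tendsto (0 : ℝ)
    simp only [hx₀, PiLp.norm_single, Real.norm_eq_abs, abs_neg]
    exact nhdsWithin_le_nhds (this.eventually (gt_mem_nhds (by linarith)))
  refine tendsto_atTop_mono' _ ?_ ((tendsto_mul_rpow_rpow_nhdsGT_zero hCn hν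
    (by linarith : 2 - μ < 0)).const_mul_atTop hK)
  filter_upwards [Ioo_mem_nhdsGT (half_pos hr), hx₀small] with β hβ hp
  rw [hA β, hb]
  exact hlow _ β (x₀ β) (mul_pos hCn (Real.rpow_pos_of_pos hβ.1 _))
    (by nlinarith [hβ.1, hβ.2]) hp
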